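/- arXiv:1709.03411 — 3 statements merged into one kernel-verified Lean document; each statement's English description precedes it below -/
import Mathlib

section
/- Let X ⊂ ℝ^d be the vertex set of a (d−1)-dimensional hypercube, namely X = {0,1}^{d−1} × {0}, and let x ∈ X be an arbitrary vertex. Then for every ε > 0 there exists a point x' ∈ ℝ^d with |x − x'| ≤ ε such that for any two distinct points y, z ∈ X \ {x}, both the angle ∠x'yz (at y) and the angle ∠yx'z (at x') are strictly less than π/2. -/
/-!
Lift the vertex `x` to height `h` above the hyperplane of the cube and push it a distance `t`
towards the centre in each cube coordinate. Since the new point lies strictly inside the cube's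
box, every angle `∠x'yz` is acute: the inner product of `x' - y` and `z - y` is a sum of
nonnegative coordinate terms, positive where `y` and `z` differ. At `x'` each cube coordinate
contributes at least `-t` to the inner product of `y - x'` and `z - x'`, while the lift
contributes `h²`; so the angle is acute once `(d - 1) t < h²`, which `t = h² / d` achieves
with `h` as small as needed.
-/

/-- The vertex set `{0,1}^(d-1) × {0}` of the `(d-1)`-dimensional unit hypercube
embedded in `ℝ^d` with last coordinate `0`. -/
def hypercube (d : ℕ) : Set (EuclideanSpace ℝ (Fin d)) :=
  {v | ∀ i : Fin d, if (i : ℕ) = d - 1 then v i = 0 else v i = 0 ∨ v i = 1}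

open EuclideanGeometry RealInnerProductSpace Real

theorem InnerProductGeometry.angle_lt_pi_div_two_iff_inner_pos {V : Type*}
    [NormedAddCommGroup V] [InnerProductSpace ℝ V] {u v : V} :
    InnerProductGeometry.angle u v < π / 2 ↔ 0 < ⟪u, v⟫ := by
  rw [InnerProductGeometry.angle, arccos_lt_pi_div_two]
  rcases eq_or_ne u 0 with rfl | hu
  · simp
  rcases eq_or_ne v 0 with rfl | hv
  · simp
  exact div_pos_iff_of_pos_right (by positivity)

theorem EuclideanGeometry.angle_lt_pi_div_two_iff_inner_pos {V P : Type*}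
    [NormedAddCommGroup V] [InnerProductSpace ℝ V] [MetricSpace P] [NormedAddTorsor V P]
    {a b c : P} : ∠ a b c < π / 2 ↔ 0 < ⟪a -ᵥ b, c -ᵥ b⟫ :=
  InnerProductGeometry.angle_lt_pi_div_two_iff_inner_pos

theorem EuclideanSpace.inner_eq_sum_castSucc_add_last {n : ℕ}
    (u v : EuclideanSpace ℝ (Fin (n + 1))) :
    ⟪u, v⟫ = ∑ i : Fin n, u i.castSucc * v i.castSucc + u (Fin.last n) * v (Fin.last n) := by
  simp only [PiLp.inner_apply, RCLike.inner_apply, conj_trivial, Fin.sum_univ_castSucc,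
    mul_comm]

theorem mem_hypercube_succ {n : ℕ} {v : EuclideanSpace ℝ (Fin (n + 1))} :
    v ∈ hypercube (n + 1) ↔
      v (Fin.last n) = 0 ∧ ∀ i : Fin n, v i.castSucc = 0 ∨ v i.castSucc = 1 := by
  simp [hypercube, Fin.forall_fin_succ', (Fin.is_lt _).ne, and_comm]

theorem mul_sub_pos_of_ne {a b p : ℝ} (ha : a = 0 ∨ a = 1) (hb : b = 0 ∨ b = 1)
    (hab : a ≠ b) (hp : p ∈ Set.Ioo 0 1) : 0 < (p - a) * (b - a) := by
  obtain ⟨hp0, hp1⟩ := hp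
  rcases ha with rfl | rfl <;> rcases hb with rfl | rfl <;>
    first | exact absurd rfl hab | nlinarith

theorem neg_le_mul_sub_shift {x a b t : ℝ} (hx : x = 0 ∨ x = 1) (ha : a = 0 ∨ a = 1)
    (hb : b = 0 ∨ b = 1) (ht : t ∈ Set.Icc 0 1) :
    -t ≤ (a - (x + t * (1 - 2 * x))) * (b - (x + t * (1 - 2 * x))) := by
  obtain ⟨ht0, ht1⟩ := ht
  rcases hx with rfl | rfl <;> rcases ha with rfl | rfl <;> rcases hb with rfl | rfl <;> nlinarith

theorem angle_lt_pi_div_two_of_mem_Ioo {n : ℕ} {p y z : EuclideanSpace ℝ (Fin (n + 1))}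
    (hp : ∀ i : Fin n, p i.castSucc ∈ Set.Ioo 0 1) (hy : y ∈ hypercube (n + 1))
    (hz : z ∈ hypercube (n + 1)) (hyz : y ≠ z) : ∠ p y z < π / 2 := by
  obtain ⟨hy_last, hy01⟩ := mem_hypercube_succ.1 hy
  obtain ⟨hz_last, hz01⟩ := mem_hypercube_succ.1 hz
  have hdiff : ∃ i : Fin n, y i.castSucc ≠ z i.castSucc := by
    by_contra! hsame
    exact hyz (PiLp.ext (Fin.lastCases (hy_last.trans hz_last.symm) hsame))
  rw [angle_lt_pi_div_two_iff_inner_pos, vsub_eq_sub, vsub_eq_sub,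
    EuclideanSpace.inner_eq_sum_castSucc_add_last]
  simp only [PiLp.sub_apply, hy_last, hz_last, sub_self, mul_zero, add_zero]
  refine Finset.sum_pos' (fun i _ => ?_) ?_
  · rcases eq_or_ne (y i.castSucc) (z i.castSucc) with hi | hi
    · simp [hi]
    · exact (mul_sub_pos_of_ne (hy01 i) (hz01 i) hi (hp i)).le
  · obtain ⟨i, hi⟩ := hdiff
    exact ⟨i, Finset.mem_univ i, mul_sub_pos_of_ne (hy01 i) (hz01 i) hi (hp i)⟩

def perturbVertex {n : ℕ} (x : EuclideanSpace ℝ (Fin (n + 1))) (t h : ℝ) :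
    EuclideanSpace ℝ (Fin (n + 1)) :=
  WithLp.toLp 2 (Fin.lastCases h fun i => x i.castSucc + t * (1 - 2 * x i.castSucc))

section perturbVertex

variable {n : ℕ} {x y z : EuclideanSpace ℝ (Fin (n + 1))} {t h : ℝ}

@[simp]
theorem perturbVertex_last : perturbVertex x t h (Fin.last n) = h := by
  simp [perturbVertex]

@[simp]
theorem perturbVertex_castSucc (i : Fin n) :
    perturbVertex x t h i.castSucc = x i.castSucc + t * (1 - 2 * x i.castSucc) := by
  simp [perturbVertex]

theorem dist_perturbVertex_sq (hx : x ∈ hypercube (n + 1)) :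
    dist x (perturbVertex x t h) ^ 2 = n * t ^ 2 + h ^ 2 := by
  obtain ⟨hx_last, hx01⟩ := mem_hypercube_succ.1 hx
  have hcoord (i : Fin n) : (x i.castSucc - perturbVertex x t h i.castSucc) ^ 2 = t ^ 2 := by
    rcases hx01 i with hi | hi <;> simp only [perturbVertex_castSucc, hi] <;> ring
  rw [dist_eq_norm, ← real_inner_self_eq_norm_sq, EuclideanSpace.inner_eq_sum_castSucc_add_last]
  simp only [PiLp.sub_apply, ← sq, hcoord, hx_last, perturbVertex_last]
  simp

theorem perturbVertex_castSucc_mem_Ioo (hx : x ∈ hypercube (n + 1)) (ht : t ∈ Set.Ioo 0 1)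
    (i : Fin n) : perturbVertex x t h i.castSucc ∈ Set.Ioo 0 1 := by
  obtain ⟨ht0, ht1⟩ := ht
  rcases (mem_hypercube_succ.1 hx).2 i with hi | hi <;> constructor <;> simp [hi] <;> linarith

theorem angle_perturbVertex_lt_pi_div_two (hx : x ∈ hypercube (n + 1))
    (hy : y ∈ hypercube (n + 1)) (hz : z ∈ hypercube (n + 1)) (ht : t ∈ Set.Icc 0 1)
    (hth : n * t < h ^ 2) : ∠ y (perturbVertex x t h) z < π / 2 := by
  obtain ⟨-, hx01⟩ := mem_hypercube_succ.1 hx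
  obtain ⟨hy_last, hy01⟩ := mem_hypercube_succ.1 hy
  obtain ⟨hz_last, hz01⟩ := mem_hypercube_succ.1 hz
  rw [angle_lt_pi_div_two_iff_inner_pos, vsub_eq_sub, vsub_eq_sub,
    EuclideanSpace.inner_eq_sum_castSucc_add_last]
  simp only [PiLp.sub_apply, hy_last, hz_last, perturbVertex_last]
  have hsum : -(n * t) ≤ ∑ i : Fin n, (y i.castSucc - perturbVertex x t h i.castSucc) *
      (z i.castSucc - perturbVertex x t h i.castSucc) := by
    calc -(n * t) = ∑ _i : Fin n, -t := by simp
      _ ≤ _ := Finset.sum_le_sum fun i _ => by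
        simpa using neg_le_mul_sub_shift (hx01 i) (hy01 i) (hz01 i) ht
  nlinarith

end perturbVertex

theorem exists_shift_lt_lift_sq (n : ℕ) {ε : ℝ} (hε : 0 < ε) :
    ∃ t h : ℝ, t ∈ Set.Ioo 0 1 ∧ n * t < h ^ 2 ∧ n * t ^ 2 + h ^ 2 ≤ ε ^ 2 := by
  set h := min (ε / 2) (1 / 2)
  have hh0 : 0 < h := lt_min (half_pos hε) one_half_pos
  have hhε : h ≤ ε / 2 := min_le_left _ _
  have hh1 : h ≤ 1 / 2 := min_le_right _ _
  have hn : (0 : ℝ) < n + 1 := n.cast_add_one_pos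
  set t := h ^ 2 / (n + 1)
  have ht0 : 0 < t := by positivity
  have hth : (n + 1) * t = h ^ 2 := mul_div_cancel₀ _ hn.ne'
  have ht1 : t < 1 := by nlinarith
  refine ⟨t, h, ⟨ht0, ht1⟩, by nlinarith, ?_⟩
  calc n * t ^ 2 + h ^ 2 ≤ 2 * h ^ 2 := by nlinarith
    _ ≤ ε ^ 2 := by nlinarith

/-- One vertex `x` of the hypercube `X = {0,1}^(d-1) × {0} ⊂ ℝ^d` can be moved by an
arbitrarily small distance `ε` to a point `x'` so that every angle `∠x'yz` (at `y`) and
`∠yx'z` (at `x'`) with distinct `y, z ∈ X \ {x}` is acute. -/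
theorem exists_perturbation_of_vertex (d : ℕ) (hd : 2 ≤ d)
    (x : EuclideanSpace ℝ (Fin d)) (hx : x ∈ hypercube d) (ε : ℝ) (hε : 0 < ε) :
    ∃ x' : EuclideanSpace ℝ (Fin d), dist x x' ≤ ε ∧
      ∀ y ∈ hypercube d, ∀ z ∈ hypercube d, y ≠ x → z ≠ x → y ≠ z →
        EuclideanGeometry.angle x' y z < Real.pi / 2 ∧
        EuclideanGeometry.angle y x' z < Real.pi / 2 := by
  obtain ⟨n, rfl⟩ : ∃ n, d = n + 1 := ⟨d - 1, by omega⟩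
  obtain ⟨t, h, ht, hth, hdist⟩ := exists_shift_lt_lift_sq n hε
  refine ⟨perturbVertex x t h, ?_, fun y hy z hz _ _ hyz => ⟨?_, ?_⟩⟩
  · rw [← pow_le_pow_iff_left₀ dist_nonneg hε.le two_ne_zero, dist_perturbVertex_sq hx]
    exact hdist
  · exact angle_lt_pi_div_two_of_mem_Ioo (perturbVertex_castSucc_mem_Ioo hx ht) hy hz hyz
  · exact angle_perturbVertex_lt_pi_div_two hx hy hz (Set.Ioo_subset_Icc_self ht) hth
end

section
/- Let X = {0,1}^{d−1} × {0} ⊂ ℝ^d, let x = (0,…,0,0) ∈ X, and let x' = (a,…,a,b) ∈ ℝ^d (first d−1 coordinates equal to a, last coordinate b). If 0 < a < 1 and b² > (d−1)·a, then for any two distinct points y, z ∈ X \ {x}, both the angle ∠x'yz (at y) and the angle ∠yx'z (at x') are strictly less than π/2. -/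
lemma angle_lt_of_inner_pos {V : Type*} [NormedAddCommGroup V] [InnerProductSpace ℝ V]
    {x y : V} (h : 0 < (inner ℝ x y : ℝ)) : InnerProductGeometry.angle x y < Real.pi / 2 := by
  rw [InnerProductGeometry.angle, Real.arccos_lt_pi_div_two]
  have hx : x ≠ 0 := by rintro rfl; simp at h
  have hy : y ≠ 0 := by rintro rfl; simp at h
  exact div_pos h (mul_pos (norm_pos_iff.2 hx) (norm_pos_iff.2 hy))

lemma inner_eq_sum {d : ℕ} (x y : EuclideanSpace ℝ (Fin d)) :
    (inner ℝ x y : ℝ) = ∑ i, x i * y i := by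
  simp [PiLp.inner_apply, RCLike.inner_apply, mul_comm]

/-- Let `x = (0,…,0)` be a vertex of `X = {0,1}^(d-1) × {0} ⊂ ℝ^d` and
`x' = (a,…,a,b)`.  If `0 < a < 1` and `b² > (d-1)·a`, then for any two distinct
`y, z ∈ X \ {x}` both the angle `∠x'yz` (at `y`) and the angle `∠yx'z` (at `x'`)
are strictly less than `π/2`. -/
theorem perturbed_origin_vertex_acute (d : ℕ) (hd : 2 ≤ d) (a b : ℝ)
    (ha : 0 < a) (ha1 : a < 1) (hb : ((d : ℝ) - 1) * a < b ^ 2)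
    (x' : EuclideanSpace ℝ (Fin d))
    (hx' : ∀ i : Fin d, x' i = if (i : ℕ) = d - 1 then b else a) :
    ∀ y ∈ hypercube d, ∀ z ∈ hypercube d, y ≠ 0 → z ≠ 0 → y ≠ z →
      EuclideanGeometry.angle x' y z < Real.pi / 2 ∧
      EuclideanGeometry.angle y x' z < Real.pi / 2 := by
  intro y hy z hz hy0 hz0 hyz
  set L : Fin d := ⟨d - 1, by omega⟩ with hL
  have hLcoe : (L : ℕ) = d - 1 := rfl
  have hyL : y L = 0 := by have := hy L; rw [if_pos hLcoe] at this; exact this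
  have hzL : z L = 0 := by have := hz L; rw [if_pos hLcoe] at this; exact this
  have hx'L : x' L = b := by rw [hx' L, if_pos hLcoe]
  have hyi : ∀ i : Fin d, i ≠ L → y i = 0 ∨ y i = 1 := by
    intro i hi
    have hic : (i : ℕ) ≠ d - 1 := fun h => hi (Fin.ext (h.trans hLcoe.symm))
    have := hy i; rwa [if_neg hic] at this
  have hzi : ∀ i : Fin d, i ≠ L → z i = 0 ∨ z i = 1 := by
    intro i hi
    have hic : (i : ℕ) ≠ d - 1 := fun h => hi (Fin.ext (h.trans hLcoe.symm))
    have := hz i; rwa [if_neg hic] at this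
  have hx'i : ∀ i : Fin d, i ≠ L → x' i = a := by
    intro i hi
    have hic : (i : ℕ) ≠ d - 1 := fun h => hi (Fin.ext (h.trans hLcoe.symm))
    rw [hx' i, if_neg hic]
  constructor
  · -- angle at y
    have key : 0 < (inner ℝ (x' - y) (z - y) : ℝ) := by
      rw [inner_eq_sum]
      obtain ⟨i0, hi0⟩ : ∃ i, y i ≠ z i := by
        by_contra h; push_neg at h; exact hyz (PiLp.ext h)
      have hi0L : i0 ≠ L := by rintro rfl; rw [hyL, hzL] at hi0; exact hi0 rfl
      apply Finset.sum_pos' _ ⟨i0, Finset.mem_univ _, ?_⟩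
      · intro i _
        simp only [PiLp.sub_apply]
        by_cases hiL : i = L
        · subst hiL; rw [hyL, hzL]; simp
        · rw [hx'i i hiL]
          rcases hyi i hiL with h1 | h1 <;> rcases hzi i hiL with h2 | h2 <;>
            rw [h1, h2] <;> nlinarith
      · simp only [PiLp.sub_apply]
        rw [hx'i i0 hi0L]
        rcases hyi i0 hi0L with h1 | h1 <;> rcases hzi i0 hi0L with h2 | h2 <;>
          rw [h1, h2] <;> rw [h1, h2] at hi0 <;> first | (exact absurd rfl hi0) | nlinarith
    exact angle_lt_of_inner_pos key
  · -- angle at x'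
    have key : 0 < (inner ℝ (y - x') (z - x') : ℝ) := by
      rw [inner_eq_sum]
      have hsplit : ∑ i, (y - x') i * (z - x') i =
          (y - x') L * (z - x') L + ∑ i ∈ Finset.univ.erase L, (y - x') i * (z - x') i :=
        (Finset.add_sum_erase _ _ (Finset.mem_univ L)).symm
      rw [hsplit]
      have hLterm : (y - x') L * (z - x') L = b ^ 2 := by
        simp only [PiLp.sub_apply]; rw [hyL, hzL, hx'L]; ring
      have hrest : ((d - 1 : ℕ) : ℝ) * (-a) ≤
          ∑ i ∈ Finset.univ.erase L, (y - x') i * (z - x') i := by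
        have := Finset.card_nsmul_le_sum (Finset.univ.erase L)
          (fun i => (y - x') i * (z - x') i) (-a) ?_
        · rwa [Finset.card_erase_of_mem (Finset.mem_univ L), Finset.card_univ,
            Fintype.card_fin, nsmul_eq_mul] at this
        · intro i hi
          have hiL : i ≠ L := Finset.ne_of_mem_erase hi
          simp only [PiLp.sub_apply]
          rw [hx'i i hiL]
          rcases hyi i hiL with h1 | h1 <;> rcases hzi i hiL with h2 | h2 <;>
            rw [h1, h2] <;> nlinarith
      have hcast : ((d - 1 : ℕ) : ℝ) = (d : ℝ) - 1 := by
        have : 1 ≤ d := by omega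
        push_cast [this]; ring
      rw [hLterm]
      rw [hcast] at hrest
      nlinarith
    exact angle_lt_of_inner_pos key
end

section
/- Let X = {0,1}^{d−1} × {0} ⊂ ℝ^d, and let x' = (a,…,a,b) ∈ ℝ^d where 0 < a < 1 and b is arbitrary. Then for any two distinct points y, z ∈ X with y ≠ 0 and z ≠ 0, the inner product ⟨x' − y, z − y⟩ is strictly positive; consequently the angle at y in the triangle x' y z is acute. -/
open scoped InnerProductSpace

theorem InnerProductGeometry.angle_lt_pi_div_two_of_inner_pos {V : Type*}
    [NormedAddCommGroup V] [InnerProductSpace ℝ V] {x y : V} (h : 0 < ⟪x, y⟫_ℝ) :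
    InnerProductGeometry.angle x y < Real.pi / 2 := by
  rw [InnerProductGeometry.angle, Real.arccos_lt_pi_div_two]
  exact div_pos h (h.trans_le (real_inner_le_norm x y))

theorem EuclideanSpace.inner_pos_of_forall_mul_nonneg {ι : Type*} [Fintype ι]
    {u v : EuclideanSpace ℝ ι} (h : ∀ i, 0 ≤ u i * v i) {i : ι} (hi : 0 < u i * v i) :
    0 < ⟪u, v⟫_ℝ := by
  simp only [PiLp.inner_apply, Real.inner_apply]
  exact Finset.sum_pos' (fun j _ => h j) ⟨i, Finset.mem_univ i, hi⟩

theorem sub_mul_sub_pos_of_ne {t p q : ℝ} (ht0 : 0 < t) (ht1 : t < 1) (hp : p = 0 ∨ p = 1)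
    (hq : q = 0 ∨ q = 1) (hpq : p ≠ q) : 0 < (t - p) * (q - p) := by
  rcases hp with rfl | rfl <;> rcases hq with rfl | rfl
  all_goals first | exact absurd rfl hpq | nlinarith

theorem sub_mul_sub_nonneg {t p q : ℝ} (ht0 : 0 < t) (ht1 : t < 1) (hp : p = 0 ∨ p = 1)
    (hq : q = 0 ∨ q = 1) : 0 ≤ (t - p) * (q - p) := by
  obtain rfl | hpq := eq_or_ne p q
  · simp
  · exact (sub_mul_sub_pos_of_ne ht0 ht1 hp hq hpq).le

section

variable {d : ℕ} {y z : EuclideanSpace ℝ (Fin d)}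

theorem apply_eq_zero_of_mem_hypercube (hy : y ∈ hypercube d) {i : Fin d}
    (hi : (i : ℕ) = d - 1) : y i = 0 := by
  simpa [hi] using hy i

theorem apply_eq_zero_or_one_of_mem_hypercube (hy : y ∈ hypercube d) {i : Fin d}
    (hi : (i : ℕ) ≠ d - 1) : y i = 0 ∨ y i = 1 := by
  simpa [hi] using hy i

theorem exists_apply_ne_of_mem_hypercube (hy : y ∈ hypercube d) (hz : z ∈ hypercube d)
    (hyz : y ≠ z) : ∃ i : Fin d, (i : ℕ) ≠ d - 1 ∧ y i ≠ z i := by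
  obtain ⟨i, hi⟩ : ∃ i, y i ≠ z i := by
    by_contra! h
    exact hyz (PiLp.ext h)
  refine ⟨i, fun hlast => hi ?_, hi⟩
  rw [apply_eq_zero_of_mem_hypercube hy hlast, apply_eq_zero_of_mem_hypercube hz hlast]

end

theorem inner_pos_at_cube_vertex_general (d : ℕ) (a b : ℝ)
    (ha : 0 < a) (ha1 : a < 1)
    (x' : EuclideanSpace ℝ (Fin d))
    (hx' : ∀ i : Fin d, x' i = if (i : ℕ) = d - 1 then b else a) :
    ∀ y ∈ hypercube d, ∀ z ∈ hypercube d, y ≠ 0 → z ≠ 0 → y ≠ z →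
      0 < ⟪x' - y, z - y⟫_ℝ ∧
      EuclideanGeometry.angle x' y z < Real.pi / 2 := by
  intro y hy z hz _ _ hyz
  have hcoord : ∀ i, 0 ≤ (x' - y) i * (z - y) i := by
    intro i
    by_cases hi : (i : ℕ) = d - 1
    · simp [apply_eq_zero_of_mem_hypercube hy hi, apply_eq_zero_of_mem_hypercube hz hi]
    · rw [PiLp.sub_apply, PiLp.sub_apply, hx', if_neg hi]
      exact sub_mul_sub_nonneg ha ha1 (apply_eq_zero_or_one_of_mem_hypercube hy hi)
        (apply_eq_zero_or_one_of_mem_hypercube hz hi)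
  obtain ⟨i, hi, hyzi⟩ := exists_apply_ne_of_mem_hypercube hy hz hyz
  have hinner : 0 < ⟪x' - y, z - y⟫_ℝ := by
    refine EuclideanSpace.inner_pos_of_forall_mul_nonneg hcoord (i := i) ?_
    rw [PiLp.sub_apply, PiLp.sub_apply, hx', if_neg hi]
    exact sub_mul_sub_pos_of_ne ha ha1 (apply_eq_zero_or_one_of_mem_hypercube hy hi)
      (apply_eq_zero_or_one_of_mem_hypercube hz hi) hyzi
  exact ⟨hinner, InnerProductGeometry.angle_lt_pi_div_two_of_inner_pos hinner⟩

/-- Let `x' = (a,…,a,b) ∈ ℝ^d` with `0 < a < 1` and `b` arbitrary.  For any two distinct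
nonzero vertices `y, z` of the hypercube `X = {0,1}^(d-1) × {0}`, the inner product
`⟪x' - y, z - y⟫` is strictly positive; consequently the angle at `y` in the triangle
`x' y z` is acute. -/
theorem inner_pos_at_cube_vertex (d : ℕ) (hd : 2 ≤ d) (a b : ℝ)
    (ha : 0 < a) (ha1 : a < 1)
    (x' : EuclideanSpace ℝ (Fin d))
    (hx' : ∀ i : Fin d, x' i = if (i : ℕ) = d - 1 then b else a) :
    ∀ y ∈ hypercube d, ∀ z ∈ hypercube d, y ≠ 0 → z ≠ 0 → y ≠ z →
      0 < ⟪x' - y, z - y⟫_ℝ ∧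
      EuclideanGeometry.angle x' y z < Real.pi / 2 :=
  inner_pos_at_cube_vertex_general d a b ha ha1 x' hx'
end
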